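/- Let α be irrational, f(θ) = θ + α mod 1 the circle rotation, g(θ) = e^{2πikθ} for a fixed nonzero integer k, and let w ∈ C¹([0,1]) with w(0) = w(1) = 0 and ∫₀¹ w = 1. Then the weighted Birkhoff average WB_N(g)(θ₀) converges to 0 = ∫₀¹ g(θ) dθ for every initial point θ₀, with |WB_N(g)(θ₀)| ≤ C/α_N for a constant C depending only on k, α, and the total variation of w, where α_N = ∑_{n=0}^{N-1} w(n/N). -/

import Mathlib

open Filter Complex

/-! Put `z = e^{2πikα}`. Irrationality of `α` gives `z ≠ 1`, so the partial sums of `∑ zⁿ` are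
bounded by `2 / |z - 1|`. Abel summation moves the weights onto these partial sums and leaves the
total variation of the samples `w (n / N)`, which is at most the Lipschitz constant `K` of `w`
on `[0, 1]` because `w 1 = 0`. So the numerator of the weighted average is bounded uniformly in
`N` and `θ₀`, while the denominator is a Riemann sum of `w`, within `K` of `N * ∫₀¹ w = N`. -/

open Finset NNReal
open scoped Real

theorem norm_geom_sum_le_of_norm_le_one {𝕜 : Type*} [NormedField 𝕜] {z : 𝕜} (hz : ‖z‖ ≤ 1)
    (hz1 : z ≠ 1) (m : ℕ) : ‖∑ j ∈ range m, z ^ j‖ ≤ 2 / ‖z - 1‖ := by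
  rw [geom_sum_eq hz1, norm_div]
  gcongr
  calc ‖z ^ m - 1‖ ≤ ‖z‖ ^ m + ‖(1 : 𝕜)‖ := (norm_sub_le _ _).trans_eq (by rw [norm_pow])
    _ ≤ 2 := by rw [norm_one]; linarith [pow_le_one₀ (norm_nonneg z) hz (n := m)]

theorem norm_sum_range_smul_le_of_norm_partial_sum_le {𝕜 E : Type*} [NormedField 𝕜]
    [SeminormedAddCommGroup E] [NormedSpace 𝕜 E] (a : ℕ → 𝕜) (f : ℕ → E) {B : ℝ}
    (hB : ∀ m, ‖∑ j ∈ range m, f j‖ ≤ B) (N : ℕ) :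
    ‖∑ n ∈ range N, a n • f n‖ ≤
      B * (‖a (N - 1)‖ + ∑ i ∈ range (N - 1), ‖a (i + 1) - a i‖) := by
  have hB0 : 0 ≤ B := (norm_nonneg _).trans (hB 0)
  rw [sum_range_by_parts, mul_add, mul_sum]
  refine (norm_sub_le _ _).trans
    (add_le_add ?_ ((norm_sum_le _ _).trans (sum_le_sum fun i _ => ?_)))
  · exact (norm_smul_le _ _).trans (by rw [mul_comm]; gcongr; exact hB N)
  · exact (norm_smul_le _ _).trans (by rw [mul_comm]; gcongr; exact hB _)

theorem exp_two_pi_I_mul_ne_one {x : ℝ} (hx : Irrational x) : exp (2 * π * I * x) ≠ 1 := by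
  rw [Ne, exp_eq_one_iff]
  rintro ⟨n, hn⟩
  refine hx.ne_int n ?_
  have : (x : ℂ) = n := by
    have h2πI : 2 * (π : ℂ) * I ≠ 0 := by simp [Real.pi_ne_zero, I_ne_zero]
    exact mul_left_cancel₀ h2πI (by rw [hn]; ring)
  exact_mod_cast this

theorem natCast_div_mem_Icc {n N : ℕ} (hn : n ≤ N) : (n / N : ℝ) ∈ Set.Icc 0 1 :=
  ⟨by positivity, div_le_one_of_le₀ (by exact_mod_cast hn) N.cast_nonneg⟩

namespace LipschitzOnWith

variable {w : ℝ → ℝ} {K : ℝ≥0}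

theorem abs_sub_le {s : Set ℝ} (hw : LipschitzOnWith K w s) {x y : ℝ} (hx : x ∈ s)
    (hy : y ∈ s) : |w x - w y| ≤ K * |x - y| := by
  simpa only [Real.norm_eq_abs] using hw.norm_sub_le hx hy

theorem abs_last_add_sum_abs_sub_le (hw : LipschitzOnWith K w (Set.Icc 0 1)) (h1 : w 1 = 0)
    (N : ℕ) :
    |w ((N - 1 : ℕ) / N)| + ∑ i ∈ range (N - 1), |w ((i + 1 : ℕ) / N) - w (i / N)| ≤ K := by
  rcases N with _ | M
  · simpa [h1] using hw.abs_sub_le (x := 0) (y := 1) (by simp) (by simp)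
  have hN : (0 : ℝ) < M + 1 := by positivity
  have hstep : ∀ i ≤ M,
      |w ((i + 1 : ℕ) / (M + 1 : ℕ)) - w (i / (M + 1 : ℕ))| ≤ K / (M + 1) := by
    intro i hi
    refine (hw.abs_sub_le (natCast_div_mem_Icc (by omega))
      (natCast_div_mem_Icc (by omega))).trans_eq ?_
    push_cast
    rw [div_sub_div_same, add_sub_cancel_left, abs_of_pos (by positivity), mul_one_div]
  -- since `w 1 = 0`, the boundary term is the last increment
  have hlast := hstep M le_rfl
  rw [div_self (by positivity : ((M + 1 : ℕ) : ℝ) ≠ 0), h1, zero_sub, abs_neg] at hlast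
  calc |w ((M + 1 - 1 : ℕ) / (M + 1 : ℕ))| + ∑ i ∈ range (M + 1 - 1),
        |w ((i + 1 : ℕ) / (M + 1 : ℕ)) - w (i / (M + 1 : ℕ))|
      ≤ ∑ _i ∈ range (M + 1), (K / (M + 1) : ℝ) := by
        rw [sum_range_succ, Nat.add_sub_cancel, add_comm]
        exact add_le_add (sum_le_sum fun i hi => hstep i (mem_range.1 hi).le) hlast
    _ = K := by rw [sum_const, card_range, nsmul_eq_mul]; push_cast; field_simp

theorem abs_integral_sub_mul_le {a b : ℝ} (hab : a ≤ b)
    (hw : LipschitzOnWith K w (Set.Icc a b)) :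
    |(∫ t in a..b, w t) - (b - a) * w a| ≤ K * (b - a) ^ 2 := by
  have hw_int : IntervalIntegrable w MeasureTheory.volume a b :=
    hw.continuousOn.intervalIntegrable_of_Icc hab
  have hsub : (∫ t in a..b, w t) - (b - a) * w a = ∫ t in a..b, (w t - w a) := by
    rw [intervalIntegral.integral_sub hw_int intervalIntegrable_const,
      intervalIntegral.integral_const, smul_eq_mul]
  rw [hsub, ← Real.norm_eq_abs, sq, ← mul_assoc, ← abs_of_nonneg (sub_nonneg.2 hab)]
  refine intervalIntegral.norm_integral_le_of_norm_le_const fun t ht => ?_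
  rw [Set.uIoc_of_le hab] at ht
  rw [Real.norm_eq_abs, abs_of_nonneg (sub_nonneg.2 hab)]
  refine (hw.abs_sub_le (Set.Ioc_subset_Icc_self ht) (Set.left_mem_Icc.2 hab)).trans ?_
  rw [abs_of_nonneg (by linarith [ht.1])]
  gcongr
  exact ht.2

theorem abs_sum_sub_mul_integral_le (hw : LipschitzOnWith K w (Set.Icc 0 1)) (N : ℕ) :
    |∑ n ∈ range N, w (n / N) - N * ∫ t in (0 : ℝ)..1, w t| ≤ K := by
  rcases N.eq_zero_or_pos with rfl | hN
  · simp
  have hN' : (0 : ℝ) < N := by exact_mod_cast hN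
  have hle : ∀ n : ℕ, (n / N : ℝ) ≤ (n + 1 : ℕ) / N := fun n => by gcongr; simp
  have hcell : ∀ n < N, Set.Icc (n / N : ℝ) ((n + 1 : ℕ) / N) ⊆ Set.Icc 0 1 := fun n hn =>
    Set.Icc_subset_Icc (natCast_div_mem_Icc hn.le).1 (natCast_div_mem_Icc hn).2
  have hsplit : ∫ t in (0 : ℝ)..1, w t =
      ∑ n ∈ range N, ∫ t in (n / N : ℝ)..((n + 1 : ℕ) / N), w t := by
    have := intervalIntegral.sum_integral_adjacent_intervals (a := fun n : ℕ => (n / N : ℝ))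
      (f := w) (μ := MeasureTheory.volume) (n := N) fun n hn =>
        ((hw.mono (hcell n hn)).continuousOn).intervalIntegrable_of_Icc (hle n)
    simpa [div_self hN'.ne'] using this.symm
  have hcell_err : ∀ n < N,
      |w (n / N) - N * ∫ t in (n / N : ℝ)..((n + 1 : ℕ) / N), w t| ≤ K / N := by
    intro n hn
    have hlen : ((n + 1 : ℕ) / N : ℝ) - n / N = 1 / N := by push_cast; ring
    have herr := (hw.mono (hcell n hn)).abs_integral_sub_mul_le (hle n)
    rw [hlen] at herr
    calc |w (n / N) - N * ∫ t in (n / N : ℝ)..((n + 1 : ℕ) / N), w t|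
        = N * |(∫ t in (n / N : ℝ)..((n + 1 : ℕ) / N), w t) - 1 / N * w (n / N)| := by
          rw [← abs_of_pos hN', ← abs_mul, abs_of_pos hN', abs_sub_comm]
          congr 1
          field_simp
      _ ≤ N * (K * (1 / N) ^ 2) := by gcongr
      _ = K / N := by field_simp
  calc |∑ n ∈ range N, w (n / N) - N * ∫ t in (0 : ℝ)..1, w t|
      = |∑ n ∈ range N, (w (n / N) - N * ∫ t in (n / N : ℝ)..((n + 1 : ℕ) / N), w t)| := by
        rw [hsplit, mul_sum, sum_sub_distrib]
    _ ≤ ∑ _n ∈ range N, (K / N : ℝ) :=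
        (abs_sum_le_sum_abs _ _).trans (sum_le_sum fun n hn => hcell_err n (mem_range.1 hn))
    _ = K := by rw [sum_const, card_range, nsmul_eq_mul]; field_simp

end LipschitzOnWith

theorem norm_sum_mul_exp_rotation_le {α : ℝ} (hα : Irrational α) {k : ℤ} (hk : k ≠ 0)
    {w : ℝ → ℝ} {K : ℝ≥0} (hw : LipschitzOnWith K w (Set.Icc 0 1)) (h1 : w 1 = 0) (θ₀ : ℝ)
    (N : ℕ) :
    ‖∑ n ∈ range N, (w (n / N) : ℂ) * exp (2 * π * I * k * (θ₀ + n * α))‖ ≤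
      2 / ‖exp (2 * π * I * k * α) - 1‖ * K := by
  have hz : exp (2 * π * I * k * α) ≠ 1 := by
    convert exp_two_pi_I_mul_ne_one (hα.intCast_mul hk) using 2; push_cast; ring
  have hz_norm : ‖exp (2 * π * I * k * α)‖ = 1 := by rw [norm_exp]; simp
  set z := exp (2 * π * I * k * α)
  have hfactor : ∑ n ∈ range N, (w (n / N) : ℂ) * exp (2 * π * I * k * (θ₀ + n * α)) =
      exp (2 * π * I * k * θ₀) * ∑ n ∈ range N, w (n / N) • z ^ n := by
    rw [mul_sum]
    refine sum_congr rfl fun n _ => ?_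
    rw [real_smul, ← exp_nat_mul, mul_left_comm, ← exp_add]
    ring_nf
  have hphase : ‖exp (2 * π * I * k * θ₀)‖ = 1 := by rw [norm_exp]; simp
  rw [hfactor, norm_mul, hphase, one_mul]
  refine (norm_sum_range_smul_le_of_norm_partial_sum_le _ _
    (norm_geom_sum_le_of_norm_le_one hz_norm.le hz) N).trans ?_
  gcongr
  simpa only [Real.norm_eq_abs] using hw.abs_last_add_sum_abs_sub_le h1 N

theorem weighted_birkhoff_irrational_rotation_general
    (α : ℝ) (hα : Irrational α) (k : ℤ) (hk : k ≠ 0)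
    (w : ℝ → ℝ) (hw : ContDiff ℝ 1 w) (h1 : w 1 = 0)
    (hint : ∫ t in (0:ℝ)..1, w t = 1) :
    ∃ C : ℝ, 0 < C ∧ ∀ θ₀ : ℝ,
      (Tendsto
        (fun N : ℕ =>
          (∑ n ∈ Finset.range N,
              (w (n / N) : ℂ) * Complex.exp (2 * Real.pi * Complex.I * k * (θ₀ + n * α))) /
            (∑ n ∈ Finset.range N, w (n / N) : ℝ))
        atTop (nhds 0)) ∧
      ∀ N : ℕ, 0 < (∑ n ∈ Finset.range N, w (n / N)) →
        ‖(∑ n ∈ Finset.range N,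
              (w (n / N) : ℂ) * Complex.exp (2 * Real.pi * Complex.I * k * (θ₀ + n * α))) /
            (∑ n ∈ Finset.range N, w (n / N) : ℝ)‖ ≤
          C / (∑ n ∈ Finset.range N, w (n / N)) := by
  obtain ⟨K, hK⟩ :=
    hw.contDiffOn.exists_lipschitzOnWith one_ne_zero (convex_Icc 0 1) isCompact_Icc
  set C := 2 / ‖exp (2 * π * I * k * α) - 1‖ * K + 1
  have hnum : ∀ θ₀ : ℝ, ∀ N : ℕ,
      ‖∑ n ∈ range N, (w (n / N) : ℂ) * exp (2 * π * I * k * (θ₀ + n * α))‖ ≤ C :=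
    fun θ₀ N => (norm_sum_mul_exp_rotation_le hα hk hK h1 θ₀ N).trans
      (le_add_of_nonneg_right zero_le_one)
  have hden : Tendsto (fun N : ℕ => ∑ n ∈ range N, w (n / N)) atTop atTop := by
    refine tendsto_atTop_mono (fun N => ?_)
      (tendsto_atTop_add_const_right _ (-K : ℝ) tendsto_natCast_atTop_atTop)
    have := hK.abs_sum_sub_mul_integral_le N
    rw [hint, mul_one] at this
    linarith [(abs_le.1 this).1]
  have hbound : ∀ θ₀ : ℝ, ∀ N : ℕ, 0 < ∑ n ∈ range N, w (n / N) →
      ‖(∑ n ∈ range N, (w (n / N) : ℂ) * exp (2 * π * I * k * (θ₀ + n * α))) /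
        (∑ n ∈ range N, w (n / N) : ℝ)‖ ≤ C / ∑ n ∈ range N, w (n / N) := fun θ₀ N hpos => by
    rw [norm_div, norm_real, Real.norm_of_nonneg hpos.le]
    gcongr
    exact hnum θ₀ N
  refine ⟨C, by positivity, fun θ₀ => ⟨?_, hbound θ₀⟩⟩
  exact squeeze_zero_norm' ((hden.eventually_gt_atTop 0).mono (hbound θ₀))
    (tendsto_const_nhds.div_atTop hden)

/-- For an irrational rotation and the character `g(θ) = e^{2πikθ}` with `k ≠ 0`,
the weighted Birkhoff averages with a `C¹` taper vanishing at the endpoints converge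
to `0 = ∫₀¹ g` for every initial point, with an `O(1/α_N)` bound. -/
theorem weighted_birkhoff_irrational_rotation
    (α : ℝ) (hα : Irrational α) (k : ℤ) (hk : k ≠ 0)
    (w : ℝ → ℝ) (hw : ContDiff ℝ 1 w) (h0 : w 0 = 0) (h1 : w 1 = 0)
    (hint : ∫ t in (0:ℝ)..1, w t = 1) :
    ∃ C : ℝ, 0 < C ∧ ∀ θ₀ : ℝ,
      (Tendsto
        (fun N : ℕ =>
          (∑ n ∈ Finset.range N,
              (w (n / N) : ℂ) * Complex.exp (2 * Real.pi * Complex.I * k * (θ₀ + n * α))) /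
            (∑ n ∈ Finset.range N, w (n / N) : ℝ))
        atTop (nhds 0)) ∧
      ∀ N : ℕ, 0 < (∑ n ∈ Finset.range N, w (n / N)) →
        ‖(∑ n ∈ Finset.range N,
              (w (n / N) : ℂ) * Complex.exp (2 * Real.pi * Complex.I * k * (θ₀ + n * α))) /
            (∑ n ∈ Finset.range N, w (n / N) : ℝ)‖ ≤
          C / (∑ n ∈ Finset.range N, w (n / N)) :=
  weighted_birkhoff_irrational_rotation_general α hα k hk w hw h1 hint
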